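/- For 1 ≤ r < s ≤ p and 1 ≤ m ≤ p, G^{(m)}_{r,s} = Σ_{a ∈ B₀} f(a) a_r a_s + Σ_{a ∉ B₀, r ≤ T(a) < s} f(a) H^{(m)}(a) a_r a_s; in particular G^{(m)}_{r,s} depends only on the entries G^{(m-1)}_{r',s'} with 1 ≤ r' < s' < s. -/

import Mathlib

open scoped Classical
open Finset

noncomputable section

/-- Bit strings in {±1}^{2p+1}, indexed by integers -p ≤ j ≤ p (Bool-encoded). -/
def QStr (p : ℕ) : Type := {j : ℤ // j ∈ Finset.Icc (-(p : ℤ)) (p : ℤ)} → Bool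

instance (p : ℕ) : Fintype (QStr p) := by unfold QStr; infer_instance
instance (p : ℕ) : DecidableEq (QStr p) := by unfold QStr; infer_instance

/-- The ±1 entry of the string `a` at index `j` (1 outside the index range). -/
def ent (p : ℕ) (a : QStr p) (j : ℤ) : ℝ :=
  if h : j ∈ Finset.Icc (-(p : ℤ)) (p : ℤ) then (if a ⟨j, h⟩ then 1 else -1) else 1

/-- Transfer matrix element ⟨x|e^{iβX}|y⟩ = cos β if x = y, i sin β otherwise. -/
def bket (x y : ℝ) (β : ℝ) : ℂ :=
  if x = y then (Real.cos β : ℂ) else Complex.I * (Real.sin β : ℂ)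

/-- f(a) = (1/2)⟨a₁|e^{iβ₁X}|a₂⟩⋯⟨a_p|e^{iβ_pX}|a₀⟩⟨a₀|e^{-iβ_pX}|a_{-p}⟩⋯⟨a_{-2}|e^{-iβ₁X}|a_{-1}⟩. -/
def fQ (p : ℕ) (β : ℕ → ℝ) (a : QStr p) : ℂ :=
  (1 / 2 : ℂ) * ∏ r ∈ Finset.Icc 1 p,
    (bket (ent p a (r : ℤ)) (ent p a (if r = p then 0 else (r : ℤ) + 1)) (β r) *
      bket (ent p a (if r = p then 0 else -((r : ℤ) + 1))) (ent p a (-(r : ℤ))) (-(β r)))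

/-- Γ_r = γ_r, Γ₀ = 0, Γ_{-r} = -γ_r. -/
def Gam (γ : ℕ → ℝ) (j : ℤ) : ℝ :=
  if 0 < j then γ j.toNat else if j < 0 then -(γ (-j).toNat) else 0

/-- Γ·(ab) = Σ_{j=-p}^{p} Γ_j a_j b_j. -/
def Gdot (p : ℕ) (γ : ℕ → ℝ) (a b : QStr p) : ℝ :=
  ∑ j ∈ Finset.Icc (-(p : ℤ)) (p : ℤ), Gam γ j * ent p a j * ent p b j

/-- a ∈ B₀ iff a_{-r} = a_r for all 1 ≤ r ≤ p. -/
def symB (p : ℕ) (a : QStr p) : Prop :=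
  ∀ r ∈ Finset.Icc (1 : ℤ) (p : ℤ), ent p a (-r) = ent p a r

/-- T(a): the largest 1 ≤ r ≤ p with a_r ≠ a_{-r}, and 0 for a ∈ B₀. -/
def Tof (p : ℕ) (a : QStr p) : ℤ :=
  WithBot.unbotD 0 (((Finset.Icc (1 : ℤ) (p : ℤ)).filter (fun r => ent p a r ≠ ent p a (-r))).max)

/-- The string a' : negate entries with 1 ≤ |j| ≤ T(a), keep the rest. -/
def primeQ (p : ℕ) (a : QStr p) : QStr p :=
  fun j => if 1 ≤ |j.1| ∧ |j.1| ≤ Tof p a then !(a j) else a j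

/-- Entrywise negation -a. -/
def negQ (p : ℕ) (a : QStr p) : QStr p := fun j => !(a j)

/-- Index reversal ā, with ā_j = a_{-j}. -/
def revQ (p : ℕ) (a : QStr p) : QStr p :=
  fun j => a ⟨-j.1, by have h := j.2; simp only [Finset.mem_Icc] at h ⊢; omega⟩

/-- The finite-D iteration (cosine form):
H_D^{(0)}(a) = 1, H_D^{(m)}(a) = (Σ_b f(b) H_D^{(m-1)}(b) cos[(1/√D) Γ·(ab)])^D. -/
def HD (p : ℕ) (β γ : ℕ → ℝ) (D : ℕ) : ℕ → QStr p → ℂ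
  | 0, _ => 1
  | m + 1, a =>
      (∑ b : QStr p, fQ p β b * HD p β γ D m b *
        (Real.cos ((1 / Real.sqrt D) * Gdot p γ a b) : ℂ)) ^ D

/-- The finite-D iteration (exponential form):
H_D^{(0)}(a) = 1, H_D^{(m)}(a) = (Σ_b f(b) H_D^{(m-1)}(b) exp[-(i/√D) Γ·(ab)])^D. -/
def HDexp (p : ℕ) (β γ : ℕ → ℝ) (D : ℕ) : ℕ → QStr p → ℂ
  | 0, _ => 1
  | m + 1, a =>
      (∑ b : QStr p, fQ p β b * HDexp p β γ D m b *
        Complex.exp (-(Complex.I / (Real.sqrt D : ℂ)) * (Gdot p γ a b : ℂ))) ^ D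

/-- The D → ∞ iteration: H^{(0)}(a) = 1,
H^{(m)}(a) = exp(-(1/2) Σ_b f(b) H^{(m-1)}(b) (Γ·(ab))²). -/
def Hinf (p : ℕ) (β γ : ℕ → ℝ) : ℕ → QStr p → ℂ
  | 0, _ => 1
  | m + 1, a =>
      Complex.exp (-(1 / 2 : ℂ) *
        ∑ b : QStr p, fQ p β b * Hinf p β γ m b * ((Gdot p γ a b) ^ 2 : ℝ))

/-- G^{(m)}_{j,k} = Σ_a f(a) H^{(m)}(a) a_j a_k, with H^{(m)} the D → ∞ iterates. -/
def GmatH (p : ℕ) (β γ : ℕ → ℝ) (m : ℕ) (j k : ℤ) : ℂ :=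
  ∑ a : QStr p, fQ p β a * Hinf p β γ m a * (ent p a j : ℂ) * (ent p a k : ℂ)

/-- The recursively-defined G matrices: G^{(0)}_{j,k} = Σ_a f(a) a_j a_k and
G^{(m)}_{j,k} = Σ_a f(a) a_j a_k exp(-(1/2) Σ_{j',k'} G^{(m-1)}_{j',k'} Γ_{j'} Γ_{k'} a_{j'} a_{k'}). -/
def GmatR (p : ℕ) (β γ : ℕ → ℝ) : ℕ → ℤ → ℤ → ℂ
  | 0, j, k => ∑ a : QStr p, fQ p β a * (ent p a j : ℂ) * (ent p a k : ℂ)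
  | m + 1, j, k =>
      ∑ a : QStr p, fQ p β a * (ent p a j : ℂ) * (ent p a k : ℂ) *
        Complex.exp (-(1 / 2 : ℂ) *
          ∑ j' ∈ Finset.Icc (-(p : ℤ)) (p : ℤ), ∑ k' ∈ Finset.Icc (-(p : ℤ)) (p : ℤ),
            GmatR p β γ m j' k' * (Gam γ j' : ℂ) * (Gam γ k' : ℂ) *
              (ent p a j' : ℂ) * (ent p a k' : ℂ))

/-- H^{(m+1)}(a) expressed through G^{(m)}:
H^{(m+1)}(a) = exp(-(1/2) Σ_{j',k'} G^{(m)}_{j',k'} Γ_{j'} Γ_{k'} a_{j'} a_{k'}). -/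
def HG (p : ℕ) (β γ : ℕ → ℝ) (m : ℕ) (a : QStr p) : ℂ :=
  Complex.exp (-(1 / 2 : ℂ) *
    ∑ j' ∈ Finset.Icc (-(p : ℤ)) (p : ℤ), ∑ k' ∈ Finset.Icc (-(p : ℤ)) (p : ℤ),
      GmatR p β γ m j' k' * (Gam γ j' : ℂ) * (Gam γ k' : ℂ) *
        (ent p a j' : ℂ) * (ent p a k' : ℂ))

end

section Lemmas

variable {p : ℕ} {β γ : ℕ → ℝ}

lemma ent_pm (a : QStr p) (j : ℤ) : ent p a j = 1 ∨ ent p a j = -1 := by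
  unfold ent
  split
  · split
    · exact Or.inl rfl
    · exact Or.inr rfl
  · exact Or.inl rfl

lemma ent_neg_of_ne {a : QStr p} {i j : ℤ} (h : ent p a i ≠ ent p a j) :
    ent p a j = -ent p a i := by
  rcases ent_pm a i with h1 | h1 <;> rcases ent_pm a j with h2 | h2 <;>
    rw [h1, h2] at h ⊢ <;> norm_num at h <;> norm_num

lemma Gam_zero (γ : ℕ → ℝ) : Gam γ 0 = 0 := by simp [Gam]

lemma Gam_neg (γ : ℕ → ℝ) (j : ℤ) : Gam γ (-j) = -Gam γ j := by
  unfold Gam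
  rcases lt_trichotomy j 0 with h | h | h
  · rw [if_pos (by omega), if_neg (by omega), if_pos h]
    simp
  · subst h; norm_num
  · rw [if_neg (by omega), if_pos h, if_pos (by omega)]
    simp

lemma ent_symm {a : QStr p} (ha : symB p a) (j : ℤ) : ent p a (-j) = ent p a j := by
  rcases lt_trichotomy j 0 with h | h | h
  · by_cases hj : -j ≤ (p : ℤ)
    · have := ha (-j) (by simp [Finset.mem_Icc]; omega)
      simpa using this.symm
    · unfold ent
      rw [dif_neg (by simp [Finset.mem_Icc]; omega), dif_neg (by simp [Finset.mem_Icc]; omega)]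
  · subst h; norm_num
  · by_cases hj : j ≤ (p : ℤ)
    · exact ha j (by simp [Finset.mem_Icc]; omega)
    · unfold ent
      rw [dif_neg (by simp [Finset.mem_Icc]; omega), dif_neg (by simp [Finset.mem_Icc]; omega)]

end Lemmas
section Lemmas2

variable {p : ℕ} {β γ : ℕ → ℝ}

lemma symB_iff_filter (a : QStr p) :
    symB p a ↔ ((Finset.Icc (1 : ℤ) (p : ℤ)).filter
      (fun r => ent p a r ≠ ent p a (-r))) = ∅ := by
  rw [Finset.filter_eq_empty_iff]
  constructor
  · intro h r hr hne; exact hne (h r hr).symm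
  · intro h r hr
    have := h hr
    push_neg at this
    exact this.symm

lemma Tof_nonneg (a : QStr p) : 0 ≤ Tof p a := by
  unfold Tof
  rcases hm : ((Finset.Icc (1 : ℤ) (p : ℤ)).filter
      (fun r => ent p a r ≠ ent p a (-r))).max with _ | t
  · exact le_refl 0
  · have ht := Finset.mem_of_max hm
    simp only [Finset.mem_filter, Finset.mem_Icc] at ht
    show (0 : ℤ) ≤ t
    omega

lemma Tof_le (a : QStr p) : Tof p a ≤ (p : ℤ) := by
  unfold Tof
  rcases hm : ((Finset.Icc (1 : ℤ) (p : ℤ)).filter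
      (fun r => ent p a r ≠ ent p a (-r))).max with _ | t
  · show (0 : ℤ) ≤ (p : ℤ)
    exact_mod_cast Nat.zero_le p
  · have ht := Finset.mem_of_max hm
    simp only [Finset.mem_filter, Finset.mem_Icc] at ht
    show t ≤ (p : ℤ)
    omega

lemma symB_Tof {a : QStr p} (h : symB p a) : Tof p a = 0 := by
  unfold Tof
  rw [(symB_iff_filter a).1 h]
  rw [Finset.max_empty]
  rfl

lemma Tof_spec {a : QStr p} (h : ¬ symB p a) :
    1 ≤ Tof p a ∧ Tof p a ≤ (p : ℤ) ∧ ent p a (Tof p a) ≠ ent p a (-(Tof p a)) := by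
  have hne : ((Finset.Icc (1 : ℤ) (p : ℤ)).filter
      (fun r => ent p a r ≠ ent p a (-r))) ≠ ∅ := by
    intro he; exact h ((symB_iff_filter a).2 he)
  obtain ⟨t, ht⟩ := Finset.max_of_nonempty (Finset.nonempty_iff_ne_empty.2 hne)
  have htm := Finset.mem_of_max ht
  simp only [Finset.mem_filter, Finset.mem_Icc] at htm
  unfold Tof
  rw [ht]
  simp only [WithBot.unbotD_coe]
  exact ⟨htm.1.1, htm.1.2, htm.2⟩

lemma ent_eq_of_Tof_lt {a : QStr p} {j : ℤ} (hj : Tof p a < j) (h1 : 1 ≤ j)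
    (h2 : j ≤ (p : ℤ)) : ent p a j = ent p a (-j) := by
  by_contra hne
  have hjmem : j ∈ (Finset.Icc (1 : ℤ) (p : ℤ)).filter
      (fun r => ent p a r ≠ ent p a (-r)) := by
    simp only [Finset.mem_filter, Finset.mem_Icc]
    exact ⟨⟨h1, h2⟩, hne⟩
  have hle := Finset.le_max hjmem
  rcases hm : ((Finset.Icc (1 : ℤ) (p : ℤ)).filter
      (fun r => ent p a r ≠ ent p a (-r))).max with _ | t
  · rw [hm] at hle; exact WithBot.not_coe_le_bot j hle
  · rw [hm] at hle
    unfold Tof at hj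
    rw [hm] at hj
    have h1 : WithBot.unbotD 0 (some t) = t := rfl
    rw [h1] at hj
    have h2 : j ≤ t := WithBot.coe_le_coe.mp hle
    omega

end Lemmas2
section Lemmas3

variable {p : ℕ} {β γ : ℕ → ℝ}

lemma ent_prime (a : QStr p) (j : ℤ) :
    ent p (primeQ p a) j =
      if 1 ≤ |j| ∧ |j| ≤ Tof p a then -ent p a j else ent p a j := by
  unfold ent primeQ
  by_cases h : j ∈ Finset.Icc (-(p : ℤ)) (p : ℤ)
  · rw [dif_pos h, dif_pos h]
    by_cases hc : 1 ≤ |j| ∧ |j| ≤ Tof p a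
    · rw [if_pos hc, if_pos hc]
      cases a ⟨j, h⟩ <;> simp
    · rw [if_neg hc, if_neg hc]
  · rw [dif_neg h, dif_neg h, if_neg]
    intro hc
    have hT := Tof_le a
    simp only [Finset.mem_Icc] at h
    rcases abs_cases j with ⟨he, _⟩ | ⟨he, _⟩ <;> omega

lemma ent_prime_flip {a : QStr p} {j : ℤ} (h1 : 1 ≤ |j|) (h2 : |j| ≤ Tof p a) :
    ent p (primeQ p a) j = -ent p a j := by
  rw [ent_prime, if_pos ⟨h1, h2⟩]

lemma ent_prime_fix {a : QStr p} {j : ℤ} (h : ¬(1 ≤ |j| ∧ |j| ≤ Tof p a)) :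
    ent p (primeQ p a) j = ent p a j := by
  rw [ent_prime, if_neg h]

lemma filter_prime_eq (a : QStr p) :
    ((Finset.Icc (1 : ℤ) (p : ℤ)).filter
      (fun r => ent p (primeQ p a) r ≠ ent p (primeQ p a) (-r))) =
    ((Finset.Icc (1 : ℤ) (p : ℤ)).filter
      (fun r => ent p a r ≠ ent p a (-r))) := by
  apply Finset.filter_congr
  intro r hr
  simp only [Finset.mem_Icc] at hr
  have habs : |r| = r := abs_of_nonneg (by omega)
  have habs' : |(-r)| = r := by rw [abs_neg, habs]
  by_cases hc : 1 ≤ r ∧ r ≤ Tof p a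
  · rw [ent_prime_flip (j := r) (by omega) (by omega),
      ent_prime_flip (j := -r) (by rw [habs']; omega) (by rw [habs']; exact hc.2)]
    simp
  · rw [ent_prime_fix (j := r) (by rw [habs]; exact hc),
      ent_prime_fix (j := -r) (by rw [habs']; exact hc)]

lemma Tof_prime (a : QStr p) : Tof p (primeQ p a) = Tof p a := by
  unfold Tof
  rw [filter_prime_eq]

lemma symB_prime (a : QStr p) : symB p (primeQ p a) ↔ symB p a := by
  rw [symB_iff_filter, symB_iff_filter, filter_prime_eq]

lemma prime_prime (a : QStr p) : primeQ p (primeQ p a) = a := by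
  funext i
  show (if 1 ≤ |i.1| ∧ |i.1| ≤ Tof p (primeQ p a) then !(primeQ p a i) else primeQ p a i) = a i
  rw [Tof_prime]
  unfold primeQ
  by_cases hc : 1 ≤ |i.1| ∧ |i.1| ≤ Tof p a
  · rw [if_pos hc, if_pos hc, Bool.not_not]
  · rw [if_neg hc, if_neg hc]

lemma primeQ_ne {a : QStr p} (h : ¬ symB p a) : primeQ p a ≠ a := by
  obtain ⟨h1, h2, _⟩ := Tof_spec h
  intro heq
  have hmem : Tof p a ∈ Finset.Icc (-(p : ℤ)) (p : ℤ) := by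
    simp only [Finset.mem_Icc]; omega
  have := congrFun heq ⟨Tof p a, hmem⟩
  rw [show primeQ p a ⟨Tof p a, hmem⟩ = !(a ⟨Tof p a, hmem⟩) from
    if_pos ⟨by rw [abs_of_nonneg (by omega : (0:ℤ) ≤ Tof p a)]; omega,
      (abs_of_nonneg (by omega : (0:ℤ) ≤ Tof p a)).le⟩] at this
  exact Bool.not_ne_self _ this

end Lemmas3
section Lemmas4

variable {p : ℕ} {β γ : ℕ → ℝ}

lemma bket_neg_neg (x y b : ℝ) : bket (-x) (-y) b = bket x y b := by
  unfold bket
  by_cases h : x = y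
  · rw [if_pos h, if_pos (by rw [h])]
  · rw [if_neg h, if_neg (fun hc => h (neg_inj.mp hc))]

lemma bket_flip_pair (b : ℝ) (x c : ℝ) (hx : x = 1 ∨ x = -1) (hc : c = 1 ∨ c = -1) :
    bket (-x) c b * bket c x (-b) = -(bket x c b * bket c (-x) (-b)) := by
  rcases hx with rfl | rfl <;> rcases hc with rfl | rfl <;>
    simp [bket, Real.cos_neg, Real.sin_neg] <;> norm_num <;> ring

lemma fQ_prime {a : QStr p} (ha : ¬ symB p a) : fQ p β (primeQ p a) = -fQ p β a := by
  obtain ⟨h1, h2, hne⟩ := Tof_spec ha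
  have hTnat : (((Tof p a).toNat : ℤ)) = Tof p a := Int.toNat_of_nonneg (by omega)
  have htmem : (Tof p a).toNat ∈ Finset.Icc 1 p := by
    simp only [Finset.mem_Icc]; omega
  unfold fQ
  rw [← Finset.mul_prod_erase _ _ htmem, ← Finset.mul_prod_erase _ _ htmem]
  have hprod : (∏ r ∈ (Finset.Icc 1 p).erase (Tof p a).toNat,
      (bket (ent p (primeQ p a) (r : ℤ)) (ent p (primeQ p a) (if r = p then 0 else (r : ℤ) + 1)) (β r) *
        bket (ent p (primeQ p a) (if r = p then 0 else -((r : ℤ) + 1))) (ent p (primeQ p a) (-(r : ℤ))) (-(β r)))) =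
      ∏ r ∈ (Finset.Icc 1 p).erase (Tof p a).toNat,
      (bket (ent p a (r : ℤ)) (ent p a (if r = p then 0 else (r : ℤ) + 1)) (β r) *
        bket (ent p a (if r = p then 0 else -((r : ℤ) + 1))) (ent p a (-(r : ℤ))) (-(β r))) := by
    apply Finset.prod_congr rfl
    intro r hr
    rw [Finset.mem_erase, Finset.mem_Icc] at hr
    obtain ⟨hrT, hr1, hrp⟩ := hr
    have hrT' : (r : ℤ) ≠ Tof p a := by omega
    rcases lt_or_gt_of_ne hrT' with hlt | hgt
    · have hrpne : r ≠ p := by omega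
      rw [if_neg hrpne, if_neg hrpne]
      rw [ent_prime_flip (j := (r : ℤ))
            (by rw [abs_of_nonneg (by omega : (0:ℤ) ≤ (r:ℤ))]; omega)
            (by rw [abs_of_nonneg (by omega : (0:ℤ) ≤ (r:ℤ))]; omega),
          ent_prime_flip (j := (r : ℤ) + 1)
            (by rw [abs_of_nonneg (by omega : (0:ℤ) ≤ (r:ℤ)+1)]; omega)
            (by rw [abs_of_nonneg (by omega : (0:ℤ) ≤ (r:ℤ)+1)]; omega),
          ent_prime_flip (j := -((r : ℤ) + 1))
            (by rw [abs_neg, abs_of_nonneg (by omega : (0:ℤ) ≤ (r:ℤ)+1)]; omega)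
            (by rw [abs_neg, abs_of_nonneg (by omega : (0:ℤ) ≤ (r:ℤ)+1)]; omega),
          ent_prime_flip (j := -(r : ℤ))
            (by rw [abs_neg, abs_of_nonneg (by omega : (0:ℤ) ≤ (r:ℤ))]; omega)
            (by rw [abs_neg, abs_of_nonneg (by omega : (0:ℤ) ≤ (r:ℤ))]; omega)]
      rw [bket_neg_neg, bket_neg_neg]
    · by_cases hrpe : r = p
      · rw [if_pos hrpe, if_pos hrpe]
        rw [ent_prime_fix (j := (r : ℤ))
              (by rw [abs_of_nonneg (by omega : (0:ℤ) ≤ (r:ℤ))]; omega),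
            ent_prime_fix (j := (0 : ℤ)) (by simp),
            ent_prime_fix (j := -(r : ℤ))
              (by rw [abs_neg, abs_of_nonneg (by omega : (0:ℤ) ≤ (r:ℤ))]; omega)]
      · rw [if_neg hrpe, if_neg hrpe,
            ent_prime_fix (j := (r : ℤ))
              (by rw [abs_of_nonneg (by omega : (0:ℤ) ≤ (r:ℤ))]; omega),
            ent_prime_fix (j := (r : ℤ) + 1)
              (by rw [abs_of_nonneg (by omega : (0:ℤ) ≤ (r:ℤ)+1)]; omega),
            ent_prime_fix (j := -((r : ℤ) + 1))
              (by rw [abs_neg, abs_of_nonneg (by omega : (0:ℤ) ≤ (r:ℤ)+1)]; omega),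
            ent_prime_fix (j := -(r : ℤ))
              (by rw [abs_neg, abs_of_nonneg (by omega : (0:ℤ) ≤ (r:ℤ))]; omega)]
  rw [hprod]
  have hfac : (bket (ent p (primeQ p a) (((Tof p a).toNat : ℕ) : ℤ))
        (ent p (primeQ p a) (if (Tof p a).toNat = p then 0 else (((Tof p a).toNat : ℕ) : ℤ) + 1)) (β (Tof p a).toNat) *
      bket (ent p (primeQ p a) (if (Tof p a).toNat = p then 0 else -((((Tof p a).toNat : ℕ) : ℤ) + 1)))
        (ent p (primeQ p a) (-(((Tof p a).toNat : ℕ) : ℤ))) (-(β (Tof p a).toNat))) =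
      -(bket (ent p a (((Tof p a).toNat : ℕ) : ℤ))
        (ent p a (if (Tof p a).toNat = p then 0 else (((Tof p a).toNat : ℕ) : ℤ) + 1)) (β (Tof p a).toNat) *
      bket (ent p a (if (Tof p a).toNat = p then 0 else -((((Tof p a).toNat : ℕ) : ℤ) + 1)))
        (ent p a (-(((Tof p a).toNat : ℕ) : ℤ))) (-(β (Tof p a).toNat))) := by
    rw [hTnat]
    by_cases htp : (Tof p a).toNat = p
    · rw [if_pos htp, if_pos htp]
      rw [ent_prime_flip (j := Tof p a)
            (by rw [abs_of_nonneg (by omega : (0:ℤ) ≤ Tof p a)]; omega)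
            (abs_of_nonneg (by omega : (0:ℤ) ≤ Tof p a)).le,
          ent_prime_fix (j := (0 : ℤ)) (by simp),
          ent_prime_flip (j := -(Tof p a))
            (by rw [abs_neg, abs_of_nonneg (by omega : (0:ℤ) ≤ Tof p a)]; omega)
            (by rw [abs_neg]; exact (abs_of_nonneg (by omega : (0:ℤ) ≤ Tof p a)).le)]
      rw [ent_neg_of_ne hne, neg_neg]
      exact bket_flip_pair _ _ _ (ent_pm a _) (ent_pm a _)
    · rw [if_neg htp, if_neg htp]
      have hnb : ent p a (Tof p a + 1) = ent p a (-(Tof p a + 1)) :=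
        ent_eq_of_Tof_lt (by omega) (by omega) (by omega)
      rw [ent_prime_flip (j := Tof p a)
            (by rw [abs_of_nonneg (by omega : (0:ℤ) ≤ Tof p a)]; omega)
            (abs_of_nonneg (by omega : (0:ℤ) ≤ Tof p a)).le,
          ent_prime_fix (j := Tof p a + 1)
            (by rw [abs_of_nonneg (by omega : (0:ℤ) ≤ Tof p a + 1)]; omega),
          ent_prime_fix (j := -(Tof p a + 1))
            (by rw [abs_neg, abs_of_nonneg (by omega : (0:ℤ) ≤ Tof p a + 1)]; omega),
          ent_prime_flip (j := -(Tof p a))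
            (by rw [abs_neg, abs_of_nonneg (by omega : (0:ℤ) ≤ Tof p a)]; omega)
            (by rw [abs_neg]; exact (abs_of_nonneg (by omega : (0:ℤ) ≤ Tof p a)).le)]
      rw [ent_neg_of_ne hne, neg_neg, ← hnb]
      exact bket_flip_pair _ _ _ (ent_pm a _) (ent_pm a _)
  rw [hfac]
  ring

end Lemmas4
section Lemmas5

variable {p : ℕ} {β γ : ℕ → ℝ}

lemma sum_neg_pair (p : ℕ) (g : ℤ → ℝ)
    (h : ∀ j ∈ Finset.Icc (-(p : ℤ)) (p : ℤ), g j + g (-j) = 0) :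
    ∑ j ∈ Finset.Icc (-(p : ℤ)) (p : ℤ), g j = 0 := by
  exact Finset.sum_involution (fun j _ => -j) (fun a ha => h a ha)
    (fun a ha hne heq => by
      have heq2 : -a = a := heq
      have ha0 : a = 0 := by omega
      subst ha0
      have h0 := h 0 (by simp [Finset.mem_Icc])
      simp at h0
      exact hne h0)
    (fun a ha => by simp only [Finset.mem_Icc] at ha ⊢; omega)
    (fun a ha => neg_neg a)

lemma Gdot_comm (a b : QStr p) : Gdot p γ a b = Gdot p γ b a := by
  unfold Gdot
  apply Finset.sum_congr rfl
  intro j _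
  ring

lemma Gdot_symm_zero {a b : QStr p} (ha : symB p a) (hb : symB p b) :
    Gdot p γ a b = 0 := by
  unfold Gdot
  apply sum_neg_pair
  intro j _
  rw [Gam_neg, ent_symm ha, ent_symm hb]
  ring

lemma Gdot_prime_right {a b : QStr p} (hT : Tof p a ≤ Tof p b) :
    Gdot p γ a (primeQ p b) = -Gdot p γ a b := by
  have key : Gdot p γ a (primeQ p b) + Gdot p γ a b = 0 := by
    unfold Gdot
    rw [← Finset.sum_add_distrib]
    apply sum_neg_pair
    intro j hj
    simp only [Finset.mem_Icc] at hj
    rw [ent_prime b j, ent_prime b (-j)]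
    by_cases hc : 1 ≤ |j| ∧ |j| ≤ Tof p b
    · rw [if_pos hc, if_pos (by rw [abs_neg]; exact hc)]
      ring
    · rw [if_neg hc, if_neg (by rw [abs_neg]; exact hc)]
      rcases eq_or_ne j 0 with rfl | hj0
      · simp [Gam_zero]
      · have habs : 1 ≤ |j| := by rcases abs_cases j with ⟨he,_⟩|⟨he,_⟩ <;> omega
        have hgt : Tof p b < |j| := by omega
        have haj : ent p a |j| = ent p a (-|j|) :=
          ent_eq_of_Tof_lt (by omega) habs (by rcases abs_cases j with ⟨he,_⟩|⟨he,_⟩ <;> omega)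
        have hbj : ent p b |j| = ent p b (-|j|) :=
          ent_eq_of_Tof_lt (by omega) habs (by rcases abs_cases j with ⟨he,_⟩|⟨he,_⟩ <;> omega)
        rcases abs_cases j with ⟨he, _⟩ | ⟨he, _⟩
        · rw [he] at haj hbj
          rw [Gam_neg, ← haj, ← hbj]
          ring
        · rw [he] at haj hbj
          rw [Gam_neg, haj, hbj, neg_neg]
          ring
  linarith

end Lemmas5
noncomputable def Hm (p : ℕ) (β γ : ℕ → ℝ) : ℕ → QStr p → ℂ
  | 0, _ => 1
  | n + 1, b => HG p β γ n b

section Lemmas6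

variable {p : ℕ} {β γ : ℕ → ℝ}

lemma GmatR_as_sum (m : ℕ) (j k : ℤ) :
    GmatR p β γ m j k =
      ∑ b : QStr p, fQ p β b * Hm p β γ m b * (ent p b j : ℂ) * (ent p b k : ℂ) := by
  cases m with
  | zero =>
      refine Eq.trans (rfl : GmatR p β γ 0 j k =
        ∑ b : QStr p, fQ p β b * (ent p b j : ℂ) * (ent p b k : ℂ)) ?_
      apply Finset.sum_congr rfl; intro b _
      show _ = fQ p β b * 1 * (ent p b j : ℂ) * (ent p b k : ℂ)
      ring
  | succ n =>
      refine Eq.trans (rfl : GmatR p β γ (n + 1) j k =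
        ∑ b : QStr p, fQ p β b * (ent p b j : ℂ) * (ent p b k : ℂ) * HG p β γ n b) ?_
      apply Finset.sum_congr rfl; intro b _
      show fQ p β b * (ent p b j : ℂ) * (ent p b k : ℂ) * HG p β γ n b
        = fQ p β b * HG p β γ n b * (ent p b j : ℂ) * (ent p b k : ℂ)
      ring

lemma expo_eq (m : ℕ) (a : QStr p) :
    (∑ j' ∈ Finset.Icc (-(p : ℤ)) (p : ℤ), ∑ k' ∈ Finset.Icc (-(p : ℤ)) (p : ℤ),
      GmatR p β γ m j' k' * (Gam γ j' : ℂ) * (Gam γ k' : ℂ) *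
        (ent p a j' : ℂ) * (ent p a k' : ℂ))
    = ∑ b : QStr p, fQ p β b * Hm p β γ m b * ((Gdot p γ a b : ℝ) : ℂ) ^ 2 := by
  have hdot : ∀ b : QStr p, ((Gdot p γ a b : ℝ) : ℂ) =
      ∑ j ∈ Finset.Icc (-(p : ℤ)) (p : ℤ),
        (Gam γ j : ℂ) * (ent p a j : ℂ) * (ent p b j : ℂ) := by
    intro b
    unfold Gdot
    push_cast
    rfl
  calc (∑ j' ∈ Finset.Icc (-(p : ℤ)) (p : ℤ), ∑ k' ∈ Finset.Icc (-(p : ℤ)) (p : ℤ),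
      GmatR p β γ m j' k' * (Gam γ j' : ℂ) * (Gam γ k' : ℂ) *
        (ent p a j' : ℂ) * (ent p a k' : ℂ))
      = ∑ j' ∈ Finset.Icc (-(p : ℤ)) (p : ℤ), ∑ k' ∈ Finset.Icc (-(p : ℤ)) (p : ℤ),
          ∑ b : QStr p, fQ p β b * Hm p β γ m b *
            ((Gam γ j' : ℂ) * (ent p a j' : ℂ) * (ent p b j' : ℂ)) *
            ((Gam γ k' : ℂ) * (ent p a k' : ℂ) * (ent p b k' : ℂ)) := by
        apply Finset.sum_congr rfl; intro j' _
        apply Finset.sum_congr rfl; intro k' _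
        rw [GmatR_as_sum, Finset.sum_mul, Finset.sum_mul, Finset.sum_mul, Finset.sum_mul]
        apply Finset.sum_congr rfl; intro b _
        ring
    _ = ∑ j' ∈ Finset.Icc (-(p : ℤ)) (p : ℤ), ∑ b : QStr p,
          ∑ k' ∈ Finset.Icc (-(p : ℤ)) (p : ℤ),
          fQ p β b * Hm p β γ m b *
            ((Gam γ j' : ℂ) * (ent p a j' : ℂ) * (ent p b j' : ℂ)) *
            ((Gam γ k' : ℂ) * (ent p a k' : ℂ) * (ent p b k' : ℂ)) :=
        Finset.sum_congr rfl (fun j' _ => Finset.sum_comm)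
    _ = ∑ b : QStr p, ∑ j' ∈ Finset.Icc (-(p : ℤ)) (p : ℤ),
          ∑ k' ∈ Finset.Icc (-(p : ℤ)) (p : ℤ),
          fQ p β b * Hm p β γ m b *
            ((Gam γ j' : ℂ) * (ent p a j' : ℂ) * (ent p b j' : ℂ)) *
            ((Gam γ k' : ℂ) * (ent p a k' : ℂ) * (ent p b k' : ℂ)) := Finset.sum_comm
    _ = ∑ b : QStr p, fQ p β b * Hm p β γ m b * ((Gdot p γ a b : ℝ) : ℂ) ^ 2 := by
        apply Finset.sum_congr rfl; intro b _
        rw [sq, hdot b, Finset.sum_mul_sum, Finset.mul_sum]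
        apply Finset.sum_congr rfl; intro j' _
        rw [Finset.mul_sum]
        apply Finset.sum_congr rfl; intro k' _
        ring

end Lemmas6
section Lemmas7

variable {p : ℕ} {β γ : ℕ → ℝ}

lemma sum_gt_eq_zero (W : QStr p → ℂ) (hW : ∀ b : QStr p, W (primeQ p b) = W b)
    (a c : QStr p) (hca : Tof p c ≤ Tof p a) :
    ∑ b ∈ Finset.univ.filter (fun b : QStr p => Tof p a < Tof p b),
      fQ p β b * W b * ((Gdot p γ c b : ℝ) : ℂ) ^ 2 = 0 := by
  have g_mem : ∀ b ∈ Finset.univ.filter (fun b : QStr p => Tof p a < Tof p b),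
      primeQ p b ∈ Finset.univ.filter (fun b : QStr p => Tof p a < Tof p b) := by
    intro b hb
    simp only [Finset.mem_filter, Finset.mem_univ, true_and] at hb ⊢
    rw [Tof_prime]; exact hb
  exact Finset.sum_involution (fun b _ => primeQ p b)
    (fun b hb => by
      simp only [Finset.mem_filter, Finset.mem_univ, true_and] at hb
      have hnb : ¬ symB p b := fun hs => by
        have h1 := symB_Tof hs; have h2 := Tof_nonneg a; omega
      have h1 : fQ p β (primeQ p b) = -fQ p β b := fQ_prime hnb
      have h2 : Gdot p γ c (primeQ p b) = -Gdot p γ c b :=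
        Gdot_prime_right (by omega)
      rw [h1, hW, h2]
      push_cast
      ring)
    (fun b hb hne => by
      simp only [Finset.mem_filter, Finset.mem_univ, true_and] at hb
      exact primeQ_ne (fun hs => by
        have h1 := symB_Tof hs; have h2 := Tof_nonneg a; omega))
    g_mem
    (fun b hb => prime_prime b)

lemma HG_prime_key (m : ℕ)
    (hW : ∀ b : QStr p, Hm p β γ m (primeQ p b) = Hm p β γ m b)
    (a : QStr p) : HG p β γ m (primeQ p a) = HG p β γ m a := by
  unfold HG
  refine congrArg Complex.exp (congrArg (fun E => -(1/2 : ℂ) * E) ?_)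
  rw [expo_eq, expo_eq]
  rw [← Finset.sum_filter_add_sum_filter_not Finset.univ (fun b : QStr p => Tof p a < Tof p b)
        (fun b => fQ p β b * Hm p β γ m b * ((Gdot p γ (primeQ p a) b : ℝ) : ℂ) ^ 2),
      ← Finset.sum_filter_add_sum_filter_not Finset.univ (fun b : QStr p => Tof p a < Tof p b)
        (fun b => fQ p β b * Hm p β γ m b * ((Gdot p γ a b : ℝ) : ℂ) ^ 2)]
  rw [sum_gt_eq_zero _ hW a (primeQ p a) (le_of_eq (Tof_prime a)),
      sum_gt_eq_zero _ hW a a (le_refl _), zero_add, zero_add]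
  apply Finset.sum_congr rfl
  intro b hb
  simp only [Finset.mem_filter, Finset.mem_univ, true_and, not_lt] at hb
  have h3 : Gdot p γ (primeQ p a) b = -Gdot p γ a b := by
    rw [Gdot_comm, Gdot_prime_right hb, Gdot_comm]
  rw [h3]
  push_cast
  ring

lemma HG_prime (m : ℕ) (a : QStr p) : HG p β γ m (primeQ p a) = HG p β γ m a := by
  induction m generalizing a with
  | zero => exact HG_prime_key 0 (fun b => rfl) a
  | succ n ih => exact HG_prime_key (n + 1) ih a

lemma Hm_prime (m : ℕ) (b : QStr p) : Hm p β γ m (primeQ p b) = Hm p β γ m b := by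
  cases m with
  | zero => rfl
  | succ n => exact HG_prime n b

lemma HG_symB (m : ℕ) {a : QStr p} (ha : symB p a) : HG p β γ m a = 1 := by
  unfold HG
  rw [expo_eq]
  rw [← Finset.sum_filter_add_sum_filter_not Finset.univ (fun b : QStr p => Tof p a < Tof p b)
        (fun b => fQ p β b * Hm p β γ m b * ((Gdot p γ a b : ℝ) : ℂ) ^ 2),
      sum_gt_eq_zero _ (Hm_prime m) a a (le_refl _), zero_add]
  have hz : ∀ b ∈ Finset.univ.filter (fun b : QStr p => ¬ Tof p a < Tof p b),
      fQ p β b * Hm p β γ m b * ((Gdot p γ a b : ℝ) : ℂ) ^ 2 = 0 := by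
    intro b hb
    simp only [Finset.mem_filter, Finset.mem_univ, true_and, not_lt] at hb
    have hsb : symB p b := by
      by_contra hnb
      have h1 := (Tof_spec hnb).1
      have h2 := symB_Tof ha
      omega
    rw [Gdot_symm_zero ha hsb]
    norm_num
  rw [Finset.sum_eq_zero hz]
  simp

end Lemmas7
/-- for 1 ≤ r < s ≤ p and 1 ≤ m ≤ p,
G^{(m)}_{r,s} = Σ_{a ∈ B₀} f(a) a_r a_s
  + Σ_{a ∉ B₀, r ≤ T(a) < s} f(a) H^{(m)}(a) a_r a_s,
with H^{(m)}(a) = exp(-(1/2) Σ_{j',k'} G^{(m-1)}_{j',k'} Γ_{j'} Γ_{k'} a_{j'} a_{k'}). -/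
theorem stmt_17 (p : ℕ) (hp : 1 ≤ p) (β γ : ℕ → ℝ) (m : ℕ) (hm1 : 1 ≤ m) (hm : m ≤ p)
    (r s : ℤ) (hr : 1 ≤ r) (hrs : r < s) (hs : s ≤ (p : ℤ)) :
    GmatR p β γ m r s =
      (∑ a ∈ Finset.univ.filter (fun a : QStr p => symB p a),
        fQ p β a * (ent p a r : ℂ) * (ent p a s : ℂ)) +
      ∑ a ∈ Finset.univ.filter
          (fun a : QStr p => ¬ symB p a ∧ r ≤ Tof p a ∧ Tof p a < s),
        fQ p β a * HG p β γ (m - 1) a * (ent p a r : ℂ) * (ent p a s : ℂ) := by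
  obtain ⟨n, rfl⟩ : ∃ n, m = n + 1 := ⟨m - 1, (Nat.succ_pred_eq_of_pos hm1).symm⟩
  simp only [Nat.add_sub_cancel]
  have hG : GmatR p β γ (n + 1) r s =
      ∑ a : QStr p, fQ p β a * (ent p a r : ℂ) * (ent p a s : ℂ) * HG p β γ n a := rfl
  rw [hG]
  rw [← Finset.sum_filter_add_sum_filter_not Finset.univ (fun a : QStr p => symB p a)
        (fun a => fQ p β a * (ent p a r : ℂ) * (ent p a s : ℂ) * HG p β γ n a)]
  congr 1
  · apply Finset.sum_congr rfl
    intro a ha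
    simp only [Finset.mem_filter, Finset.mem_univ, true_and] at ha
    rw [HG_symB n ha, mul_one]
  · rw [← Finset.sum_filter_add_sum_filter_not
        (Finset.univ.filter (fun a : QStr p => ¬ symB p a))
        (fun a : QStr p => r ≤ Tof p a ∧ Tof p a < s)
        (fun a => fQ p β a * (ent p a r : ℂ) * (ent p a s : ℂ) * HG p β γ n a)]
    rw [Finset.filter_filter, Finset.filter_filter]
    have hzero : (∑ a ∈ Finset.univ.filter
          (fun a : QStr p => ¬ symB p a ∧ ¬(r ≤ Tof p a ∧ Tof p a < s)),
        fQ p β a * (ent p a r : ℂ) * (ent p a s : ℂ) * HG p β γ n a) = 0 := by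
      have g_mem : ∀ a ∈ Finset.univ.filter
            (fun a : QStr p => ¬ symB p a ∧ ¬(r ≤ Tof p a ∧ Tof p a < s)),
          primeQ p a ∈ Finset.univ.filter
            (fun a : QStr p => ¬ symB p a ∧ ¬(r ≤ Tof p a ∧ Tof p a < s)) := by
        intro a ha
        simp only [Finset.mem_filter, Finset.mem_univ, true_and] at ha ⊢
        rw [Tof_prime]
        refine ⟨fun hs => ha.1 ((symB_prime a).mp hs), ha.2⟩
      refine Finset.sum_involution (fun a _ => primeQ p a)
        (fun a ha => ?_)
        (fun a ha hne => by
          simp only [Finset.mem_filter, Finset.mem_univ, true_and] at ha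
          exact primeQ_ne ha.1)
        g_mem
        (fun a ha => prime_prime a)
      simp only [Finset.mem_filter, Finset.mem_univ, true_and] at ha
      obtain ⟨hnsym, hcond⟩ := ha
      have h1 : fQ p β (primeQ p a) = -fQ p β a := fQ_prime hnsym
      have h2 : HG p β γ n (primeQ p a) = HG p β γ n a := HG_prime n a
      have hT1 := (Tof_spec hnsym).1
      have hs1 : (1 : ℤ) ≤ s := by omega
      push_neg at hcond
      by_cases hc : r ≤ Tof p a
      · have hcs : s ≤ Tof p a := hcond hc
        rw [h1, h2,
          ent_prime_flip (j := r) (by rw [abs_of_nonneg (by omega : (0:ℤ) ≤ r)]; omega)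
            (by rw [abs_of_nonneg (by omega : (0:ℤ) ≤ r)]; omega),
          ent_prime_flip (j := s) (by rw [abs_of_nonneg (by omega : (0:ℤ) ≤ s)]; omega)
            (by rw [abs_of_nonneg (by omega : (0:ℤ) ≤ s)]; omega)]
        push_cast
        ring
      · rw [h1, h2,
          ent_prime_fix (j := r) (by rw [abs_of_nonneg (by omega : (0:ℤ) ≤ r)]; omega),
          ent_prime_fix (j := s) (by rw [abs_of_nonneg (by omega : (0:ℤ) ≤ s)]; omega)]
        push_cast
        ring
    rw [hzero, add_zero]
    refine Finset.sum_congr (Finset.filter_congr (fun x _ => Iff.rfl)) ?_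
    intro a _
    ring
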